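/- For a solution of g''(t) = 2F + c − 4B²g(t) with c ≤ 0 constant, B > 0, the first positive zero of g (when it exists) is a nonincreasing function of B when F < 0 and initial data g(0) = g₀ > 0, g'(0) = 0 are fixed; in particular as B → ∞ the blow-up time tends to 0. -/

import Mathlib

/-!
The solution is `g_B(t) = a + (g₀ - a) cos (2Bt)` with `a = (2F + c)/(4B²) < 0`, so its first
positive zero is `t_*(B) = arccos r(B) / (2B)`, where `r(B) = p / (p - 4g₀B²) ∈ (0, 1)` and
`p = 2F + c`. Since `t_*(B) ≤ π/(2B)`, it tends to `0`. For monotonicity, `θ(B) = arccos r(B)`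
satisfies `B θ'(B) ≤ sin θ(B) ≤ θ(B)`: the first inequality amounts to `-B r' ≤ 1 - r²`, whose
gap is `(4g₀B²)² / (p - 4g₀B²)²`, and `B θ' ≤ θ` makes `θ(B)/B` nonincreasing.
-/

open Real Filter Set

lemma Real.arccos_cos_le {x : ℝ} (hx : 0 ≤ x) : arccos (cos x) ≤ x := by
  rcases le_or_gt x π with h | h
  · rw [arccos_cos hx h]
  · exact (arccos_le_pi _).trans h.le

lemma isLeast_pos_cos_mul_eq {ω r : ℝ} (hω : 0 < ω) (hr₁ : -1 ≤ r) (hr₂ : r < 1) :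
    IsLeast {t : ℝ | 0 < t ∧ cos (ω * t) = r} (arccos r / ω) := by
  refine ⟨⟨div_pos (arccos_pos.2 hr₂) hω, ?_⟩, ?_⟩
  · rw [mul_div_cancel₀ _ hω.ne', cos_arccos hr₁ hr₂.le]
  · rintro t ⟨ht, rfl⟩
    rw [div_le_iff₀' hω]
    exact arccos_cos_le (by positivity)

lemma isLeast_pos_zeros_add_mul_cos {a g₀ ω : ℝ} (ha : a < 0) (hg₀ : 0 < g₀) (hω : 0 < ω) :
    IsLeast {t : ℝ | 0 < t ∧ a + (g₀ - a) * cos (ω * t) = 0} (arccos (a / (a - g₀)) / ω) := by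
  have hd : a - g₀ < 0 := by linarith
  have hzero : ∀ x : ℝ, a + (g₀ - a) * x = 0 ↔ x = a / (a - g₀) := fun x => by
    rw [eq_div_iff hd.ne]
    constructor <;> intro h <;> linarith
  simp_rw [hzero]
  exact isLeast_pos_cos_mul_eq hω (by linarith [div_pos_of_neg_of_neg ha hd])
    ((div_lt_one_of_neg hd).2 (by linarith))

lemma deriv_const_add_mul_cos (a A ω : ℝ) :
    deriv (fun t => a + A * cos (ω * t)) = fun t => -(A * ω * sin (ω * t)) := by
  funext t
  have h : HasDerivAt (fun t => a + A * cos (ω * t)) (A * (-sin (ω * t) * (ω * 1))) t :=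
    (((hasDerivAt_id' t).const_mul ω).cos.const_mul A).const_add a
  rw [h.deriv]
  ring

lemma hasDerivAt_deriv_const_add_mul_cos (a A ω t : ℝ) :
    HasDerivAt (deriv fun t => a + A * cos (ω * t))
      (ω ^ 2 * a - ω ^ 2 * (a + A * cos (ω * t))) t := by
  rw [deriv_const_add_mul_cos]
  have h : HasDerivAt (fun t => -(A * ω * sin (ω * t))) (-(A * ω * (cos (ω * t) * (ω * 1)))) t :=
    (((hasDerivAt_id' t).const_mul ω).sin.const_mul (A * ω)).neg
  exact h.congr_deriv (by ring)

lemma antitoneOn_div_self_of_mul_deriv_le {f f' : ℝ → ℝ}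
    (hf : ∀ x, 0 < x → HasDerivAt f (f' x) x) (h : ∀ x, 0 < x → x * f' x ≤ f x) :
    AntitoneOn (fun x => f x / x) (Ioi 0) := by
  have hquot : ∀ x, 0 < x → HasDerivAt (fun x => f x / x) ((f' x * x - f x * 1) / x ^ 2) x :=
    fun x hx => (hf x hx).div (hasDerivAt_id x) hx.ne'
  refine antitoneOn_of_hasDerivWithinAt_nonpos (f' := fun x => (f' x * x - f x * 1) / x ^ 2)
    (convex_Ioi 0)
    (fun x hx => (hquot x hx).continuousAt.continuousWithinAt) (fun x hx => ?_) (fun x hx => ?_)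
  · rw [interior_Ioi] at hx
    exact (hquot x hx).hasDerivWithinAt
  · rw [interior_Ioi] at hx
    exact div_nonpos_of_nonpos_of_nonneg (by linarith [h x hx]) (sq_nonneg x)

lemma mul_deriv_arccos_comp_le {r r' x : ℝ} (hr : r ^ 2 < 1) (h : x * -r' ≤ 1 - r ^ 2) :
    x * (-(1 / √(1 - r ^ 2)) * r') ≤ arccos r := by
  have hs : 0 < √(1 - r ^ 2) := sqrt_pos.2 (by linarith)
  calc x * (-(1 / √(1 - r ^ 2)) * r') = x * -r' / √(1 - r ^ 2) := by ring
    _ ≤ (1 - r ^ 2) / √(1 - r ^ 2) := div_le_div_of_nonneg_right h hs.le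
    _ = sin (arccos r) := by rw [div_sqrt, sin_arccos]
    _ ≤ arccos r := sin_le (arccos_nonneg r)

noncomputable def blowupTime (p g₀ B : ℝ) : ℝ := arccos (p / (p - 4 * g₀ * B ^ 2)) / (2 * B)

section blowupTime

variable {p g₀ B : ℝ}

lemma blowupDenom_neg (hp : p < 0) (hg₀ : 0 < g₀) (hB : 0 < B) : p - 4 * g₀ * B ^ 2 < 0 := by
  nlinarith [mul_pos hg₀ (pow_pos hB 2)]

lemma blowupLevel_mem_Ioo (hp : p < 0) (hg₀ : 0 < g₀) (hB : 0 < B) :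
    p / (p - 4 * g₀ * B ^ 2) ∈ Ioo 0 1 :=
  ⟨div_pos_of_neg_of_neg hp (blowupDenom_neg hp hg₀ hB),
    (div_lt_one_of_neg (blowupDenom_neg hp hg₀ hB)).2 (by nlinarith [mul_pos hg₀ (pow_pos hB 2)])⟩

lemma hasDerivAt_arccos_blowupLevel (hp : p < 0) (hg₀ : 0 < g₀) (hB : 0 < B) :
    HasDerivAt (fun B => arccos (p / (p - 4 * g₀ * B ^ 2)))
      (-(1 / √(1 - (p / (p - 4 * g₀ * B ^ 2)) ^ 2)) *
        (8 * p * g₀ * B / (p - 4 * g₀ * B ^ 2) ^ 2)) B := by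
  have hd := blowupDenom_neg hp hg₀ hB
  obtain ⟨hr₀, hr₁⟩ := blowupLevel_mem_Ioo hp hg₀ hB
  have hden : HasDerivAt (fun B : ℝ => p - 4 * g₀ * B ^ 2) (-(4 * g₀ * (2 * B))) B := by
    simpa using ((hasDerivAt_pow 2 B).const_mul (4 * g₀)).const_sub p
  have hr : HasDerivAt (fun B => p / (p - 4 * g₀ * B ^ 2))
      (8 * p * g₀ * B / (p - 4 * g₀ * B ^ 2) ^ 2) B :=
    ((hasDerivAt_const B p).div hden hd.ne).congr_deriv (by ring)
  exact HasDerivAt.comp (h₂ := arccos) B (hasDerivAt_arccos (by linarith) hr₁.ne) hr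

lemma antitoneOn_blowupTime (hp : p < 0) (hg₀ : 0 < g₀) :
    AntitoneOn (blowupTime p g₀) (Ioi 0) := by
  have h := antitoneOn_div_self_of_mul_deriv_le
    (fun B hB => (hasDerivAt_arccos_blowupLevel hp hg₀ hB).div_const 2) fun B hB => ?_
  · unfold blowupTime
    simpa only [div_div] using h
  have hd := blowupDenom_neg hp hg₀ hB
  obtain ⟨hr₀, hr₁⟩ := blowupLevel_mem_Ioo hp hg₀ hB
  have hr : (p / (p - 4 * g₀ * B ^ 2)) ^ 2 < 1 := by nlinarith
  have hslope : B * -(8 * p * g₀ * B / (p - 4 * g₀ * B ^ 2) ^ 2) ≤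
      1 - (p / (p - 4 * g₀ * B ^ 2)) ^ 2 := by
    have hgap : 1 - (p / (p - 4 * g₀ * B ^ 2)) ^ 2 -
        B * -(8 * p * g₀ * B / (p - 4 * g₀ * B ^ 2) ^ 2) =
        (4 * g₀ * B ^ 2) ^ 2 / (p - 4 * g₀ * B ^ 2) ^ 2 := by
      field_simp [hd.ne]
      ring
    linarith [div_nonneg (sq_nonneg (4 * g₀ * B ^ 2)) (sq_nonneg (p - 4 * g₀ * B ^ 2))]
  linarith [mul_deriv_arccos_comp_le hr hslope]

end blowupTime

lemma tendsto_blowupTime_atTop (p g₀ : ℝ) : Tendsto (blowupTime p g₀) atTop (nhds 0) := by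
  have hbound : Tendsto (fun B : ℝ => π / 2 * B⁻¹) atTop (nhds 0) := by
    simpa using tendsto_inv_atTop_zero.const_mul (π / 2)
  refine tendsto_of_tendsto_of_tendsto_of_le_of_le' tendsto_const_nhds hbound ?_ ?_ <;>
    filter_upwards [eventually_gt_atTop 0] with B hB
  · exact div_nonneg (arccos_nonneg _) (by positivity)
  · rw [blowupTime, div_mul_eq_div_div, div_eq_mul_inv _ B]
    gcongr
    exact arccos_le_pi _

/-- For the solution of `g'' = 2F + c - 4B²g` (`c ≤ 0`, `F < 0`) with initial data
`g(0) = g₀ > 0`, `g'(0) = 0`, the first positive zero of `g` is a nonincreasing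
function of the field strength `B > 0`, and it tends to `0` as `B → ∞`. -/
theorem blowup_time_nonincreasing_in_B (F c g₀ : ℝ) (hF : F < 0) (hc : c ≤ 0)
    (hg₀ : 0 < g₀) (g : ℝ → ℝ → ℝ)
    (hgdef : ∀ B t, g B t = (2 * F + c) / (4 * B ^ 2)
      + (g₀ - (2 * F + c) / (4 * B ^ 2)) * Real.cos (2 * B * t))
    (tstar : ℝ → ℝ)
    (htstar : ∀ B, tstar B = sInf {t : ℝ | 0 < t ∧ g B t = 0}) :
    (∀ B, 0 < B → (∀ t, HasDerivAt (deriv (g B)) (2 * F + c - 4 * B ^ 2 * g B t) t) ∧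
      g B 0 = g₀ ∧ deriv (g B) 0 = 0) ∧
    AntitoneOn tstar (Set.Ioi (0:ℝ)) ∧
    Tendsto tstar atTop (nhds 0) := by
  have hp : 2 * F + c < 0 := by linarith
  have hg : ∀ B, g B = fun t => (2 * F + c) / (4 * B ^ 2)
      + (g₀ - (2 * F + c) / (4 * B ^ 2)) * cos (2 * B * t) := fun B => funext (hgdef B)
  have htstar_eq : EqOn (blowupTime (2 * F + c) g₀) tstar (Ioi 0) := fun B (hB : 0 < B) => by
    have ha : (2 * F + c) / (4 * B ^ 2) < 0 := div_neg_of_neg_of_pos hp (by positivity)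
    rw [htstar, hg, (isLeast_pos_zeros_add_mul_cos ha hg₀ (by positivity)).csInf_eq, blowupTime]
    congr 2
    field_simp
  refine ⟨fun B hB => ⟨fun t => ?_, ?_, ?_⟩, (antitoneOn_blowupTime hp hg₀).congr htstar_eq,
    (tendsto_blowupTime_atTop (2 * F + c) g₀).congr' ?_⟩
  · rw [hg]
    refine (hasDerivAt_deriv_const_add_mul_cos _ _ _ t).congr_deriv ?_
    field_simp
    ring
  · simp [hg]
  · rw [hg, deriv_const_add_mul_cos]
    simp
  · filter_upwards [eventually_gt_atTop 0] with B hB using htstar_eq hB
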